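/- arXiv:math/0506146 — 5 statements merged into one kernel-verified Lean document; each statement's English description precedes it below -/
import Mathlib

section
/- Over a 2-perfect semilocal commutative ring S (the squaring map S → S is surjective), any semiregular ternary quadratic form q on a free rank-3 module V is isometric to the standard form q¹(x₁e₁+x₂e₂+x₃e₃) = x₁x₂ + x₃²; i.e., there exists g ∈ GL(V) with q∘g⁻¹ = q¹. -/
noncomputable section

open QuadraticMap

/-- The half-discriminant of a ternary quadratic form relative to a triple of vectors. -/
def halfDisc {R V : Type*} [CommRing R] [AddCommGroup V] [Module R V]
    (q : QuadraticForm R V) (f : Fin 3 → V) : R :=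
  4 * q (f 0) * q (f 1) * q (f 2)
    + polar (⇑q) (f 0) (f 1) * polar (⇑q) (f 0) (f 2) * polar (⇑q) (f 1) (f 2)
    - (q (f 0) * polar (⇑q) (f 1) (f 2) ^ 2 + q (f 1) * polar (⇑q) (f 0) (f 2) ^ 2
        + q (f 2) * polar (⇑q) (f 0) (f 1) ^ 2)

/-!
Over each residue field `q` is nondegenerate, so some pair of vectors has nonzero binary
discriminant `polar q x y ^ 2 - 4 q(x) q(y)`; the Chinese remainder theorem glues these local
pairs into a pair `x, y` over `S` whose discriminant is a unit. The half-discriminant is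
multiplied by `det ^ 2` under a change of basis and equals `-q(z) · disc(x, y)` on a triple with
`z ⟂ x, y`. A cross-product construction gives `t` with `det ![x, y, t] = disc(x, y)`, so the
projection `z` of `t` orthogonal to `x, y` has `q(z)` a unit. A square root of `-q(x)/q(z)`
makes `x + γ z` isotropic, which yields a hyperbolic pair `h, h'`; the same projection argument
for `h, h'` gives an orthogonal vector of unit value, which a square root rescales to value `1`.
-/

section

variable {R V : Type*} [CommRing R] [AddCommGroup V] [Module R V] (q : QuadraticForm R V)

/-- The discriminant of the binary form `(s, t) ↦ q (s • x + t • y)`. -/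
def pairDisc (x y : V) : R := polar q x y ^ 2 - 4 * q x * q y

theorem QuadraticMap.map_sum_fin_three (c : Fin 3 → R) (f : Fin 3 → V) :
    q (∑ j, c j • f j) = c 0 ^ 2 * q (f 0) + c 1 ^ 2 * q (f 1) + c 2 ^ 2 * q (f 2)
      + c 0 * c 1 * polar q (f 0) (f 1) + c 0 * c 2 * polar q (f 0) (f 2)
      + c 1 * c 2 * polar q (f 1) (f 2) := by
  rw [Fin.sum_univ_three, QuadraticMap.map_add q (_ + _), QuadraticMap.map_add q, polar_add_left]
  simp only [QuadraticMap.map_smul, polar_smul_left, polar_smul_right, smul_eq_mul]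
  ring

theorem QuadraticMap.polar_sum_fin_three (c d : Fin 3 → R) (f : Fin 3 → V) :
    polar q (∑ j, c j • f j) (∑ j, d j • f j) =
      2 * (c 0 * d 0 * q (f 0) + c 1 * d 1 * q (f 1) + c 2 * d 2 * q (f 2))
      + (c 0 * d 1 + c 1 * d 0) * polar q (f 0) (f 1)
      + (c 0 * d 2 + c 2 * d 0) * polar q (f 0) (f 2)
      + (c 1 * d 2 + c 2 * d 1) * polar q (f 1) (f 2) := by
  simp only [Fin.sum_univ_three, polar_add_left, polar_add_right, polar_smul_left,
    polar_smul_right, polar_self, smul_eq_mul, nsmul_eq_mul]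
  rw [polar_comm q (f 1) (f 0), polar_comm q (f 2) (f 0), polar_comm q (f 2) (f 1)]
  push_cast
  ring

theorem halfDisc_sum_smul (M : Matrix (Fin 3) (Fin 3) R) (f : Fin 3 → V) :
    halfDisc q (fun i => ∑ j, M i j • f j) = M.det ^ 2 * halfDisc q f := by
  simp only [halfDisc, map_sum_fin_three, polar_sum_fin_three, Matrix.det_fin_three]
  ring

theorem halfDisc_of_polar_eq_zero {x y z : V} (hxz : polar q x z = 0) (hyz : polar q y z = 0) :
    halfDisc q ![x, y, z] = -(q z * pairDisc q x y) := by
  simp only [halfDisc, pairDisc, Matrix.cons_val_zero, Matrix.cons_val_one, Matrix.cons_val_two,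
    Matrix.head_cons, Matrix.tail_cons, hxz, hyz]
  ring

variable {q}

theorem QuadraticMap.polar_mem_of_mem_smul_top {I : Ideal R} {x : V}
    (hx : x ∈ I • (⊤ : Submodule R V)) (y : V) : polar q x y ∈ I := by
  refine Submodule.smul_induction_on hx (fun r hr n _ => ?_) (fun a b ha hb => ?_)
  · rw [polar_smul_left, smul_eq_mul]
    exact I.mul_mem_right _ hr
  · rw [polar_add_left]
    exact I.add_mem ha hb

theorem QuadraticMap.apply_mem_of_mem_smul_top {I : Ideal R} {x : V}
    (hx : x ∈ I • (⊤ : Submodule R V)) : q x ∈ I := by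
  refine Submodule.smul_induction_on' hx (fun r hr n _ => ?_) (fun a ha b _ hqa hqb => ?_)
  · rw [QuadraticMap.map_smul, smul_eq_mul]
    exact I.mul_mem_right _ (I.mul_mem_right _ hr)
  · rw [QuadraticMap.map_add (⇑q) a b]
    exact I.add_mem (I.add_mem hqa hqb) (polar_mem_of_mem_smul_top ha b)

theorem pairDisc_mk_eq_of_sub_mem {I : Ideal R} {x x' y y' : V}
    (hx : x - x' ∈ I • (⊤ : Submodule R V)) (hy : y - y' ∈ I • (⊤ : Submodule R V)) :
    Ideal.Quotient.mk I (pairDisc q x y) = Ideal.Quotient.mk I (pairDisc q x' y') := by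
  have hq : ∀ {u u' : V}, u - u' ∈ I • (⊤ : Submodule R V) →
      Ideal.Quotient.mk I (q u) = Ideal.Quotient.mk I (q u') := fun {u u'} h => by
    rw [Ideal.Quotient.eq, ← sub_add_cancel u u', QuadraticMap.map_add (⇑q)]
    convert I.add_mem (apply_mem_of_mem_smul_top h) (polar_mem_of_mem_smul_top h u') using 1
    ring
  have hpolar : Ideal.Quotient.mk I (polar q x y) = Ideal.Quotient.mk I (polar q x' y') := by
    rw [Ideal.Quotient.eq, ← sub_add_sub_cancel _ (polar q x' y) _, ← polar_sub_left,
      ← polar_sub_right, polar_comm q x']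
    exact I.add_mem (polar_mem_of_mem_smul_top hx y) (polar_mem_of_mem_smul_top hy x')
  simp only [pairDisc, map_sub, map_mul, map_pow, map_ofNat, hq hx, hq hy, hpolar]

theorem Submodule.exists_forall_sub_mem_smul_top {ι : Type*} [Finite ι] {I : ι → Ideal R}
    (hI : Pairwise fun i j => IsCoprime (I i) (I j)) (x : ι → V) :
    ∃ y : V, ∀ i, y - x i ∈ I i • (⊤ : Submodule R V) := by
  classical
  have := Fintype.ofFinite ι
  choose e he using fun j => Ideal.exists_forall_sub_mem_ideal hI (Pi.single j 1 : ι → R)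
  refine ⟨∑ j, e j • x j, fun i => ?_⟩
  have hx : x i = ∑ j, (Pi.single j 1 : ι → R) i • x j := by
    simp [Pi.single_apply]
  rw [hx, ← Finset.sum_sub_distrib]
  refine Submodule.sum_mem _ fun j _ => ?_
  rw [← sub_smul]
  exact Submodule.smul_mem_smul (he j i) Submodule.mem_top

theorem halfDisc_mem_of_forall_pairDisc_mem (p : Ideal R) [p.IsPrime] (f : Fin 3 → V)
    (h : ∀ x y, pairDisc q x y ∈ p) : halfDisc q f ∈ p := by
  set π := Ideal.Quotient.mk p
  have key : ∀ x y, π (polar q x y) ^ 2 = 4 * π (q x) * π (q y) := fun x y => by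
    have := Ideal.Quotient.eq_zero_iff_mem.mpr (h x y)
    simp only [pairDisc, map_sub, map_mul, map_pow, map_ofNat] at this
    exact sub_eq_zero.mp this
  have h01 := key (f 0) (f 1)
  have h02 := key (f 0) (f 2)
  have h12 := key (f 1) (f 2)
  have h012 := key (f 0) (f 1 + f 2)
  rw [QuadraticMap.map_add (⇑q), polar_add_right, map_add, map_add, map_add] at h012
  rw [← Ideal.Quotient.eq_zero_iff_mem]
  simp only [halfDisc, map_sub, map_add, map_mul, map_pow, map_ofNat]
  -- `R ⧸ p` is a domain: if `2 = 0` there all polar values vanish, otherwise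
  -- `2 * halfDisc` is a combination of four binary discriminants.
  by_cases h2 : (2 : R ⧸ p) = 0
  · have hb : ∀ {x y}, π (polar q x y) = 0 := fun {x y} =>
      (pow_eq_zero_iff two_ne_zero).mp <| by
        rw [key]
        linear_combination 2 * π (q x) * π (q y) * h2
    rw [hb, hb, hb]
    linear_combination 2 * π (q (f 0)) * π (q (f 1)) * π (q (f 2)) * h2
  · refine (mul_eq_zero.mp ?_).resolve_left h2
    linear_combination π (polar q (f 1) (f 2)) * (h012 - h01 - h02) + 2 * π (q (f 0)) * h12
      - 2 * π (q (f 1)) * h02 - 2 * π (q (f 2)) * h01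

theorem exists_isUnit_pairDisc [Finite (MaximalSpectrum R)] (f : Fin 3 → V)
    (hq : IsUnit (halfDisc q f)) : ∃ x y, IsUnit (pairDisc q x y) := by
  have hlocal : ∀ m : MaximalSpectrum R, ∃ x y, pairDisc q x y ∉ m.asIdeal := fun m => by
    by_contra! h
    exact m.isMaximal.ne_top (Ideal.eq_top_of_isUnit_mem _
      (halfDisc_mem_of_forall_pairDisc_mem m.asIdeal f h) hq)
  choose x y hxy using hlocal
  have hcop : Pairwise fun m m' : MaximalSpectrum R => IsCoprime m.asIdeal m'.asIdeal :=
    fun m m' hne => Ideal.isCoprime_iff_sup_eq.mpr <|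
      m.isMaximal.coprime_of_ne m'.isMaximal (mt MaximalSpectrum.ext hne)
  obtain ⟨x₀, hx₀⟩ := Submodule.exists_forall_sub_mem_smul_top hcop x
  obtain ⟨y₀, hy₀⟩ := Submodule.exists_forall_sub_mem_smul_top hcop y
  refine ⟨x₀, y₀, not_not.mp fun hu => ?_⟩
  obtain ⟨m, hm, hmem⟩ := exists_max_ideal_of_mem_nonunits hu
  refine hxy ⟨m, hm⟩ (Ideal.Quotient.eq_zero_iff_mem.mp ?_)
  rw [← pairDisc_mk_eq_of_sub_mem (hx₀ ⟨m, hm⟩) (hy₀ ⟨m, hm⟩), Ideal.Quotient.eq_zero_iff_mem]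
  exact hmem

theorem exists_orthogonal_isUnit_of_isUnit_halfDisc {x y t : V} (hxy : IsUnit (pairDisc q x y))
    (ht : IsUnit (halfDisc q ![x, y, t])) :
    ∃ z, polar q x z = 0 ∧ polar q y z = 0 ∧ IsUnit (q z) := by
  set δ := pairDisc q x y
  set α := 2 * q y * polar q x t - polar q x y * polar q y t
  set β := 2 * q x * polar q y t - polar q x y * polar q x t
  set z := α • x + β • y + δ • t
  have hxz : polar q x z = 0 := by
    simp only [z, polar_add_right, polar_smul_right, polar_self, smul_eq_mul, δ, α, β, pairDisc]
    ring
  have hyz : polar q y z = 0 := by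
    simp only [z, polar_add_right, polar_smul_right, polar_self, smul_eq_mul, δ, α, β, pairDisc]
    rw [polar_comm q y x]
    ring
  have hz : halfDisc q ![x, y, z] = δ ^ 2 * halfDisc q ![x, y, t] := by
    convert halfDisc_sum_smul q !![1, 0, 0; 0, 1, 0; α, β, δ] ![x, y, t] using 2
    · ext i : 1
      fin_cases i <;> simp [Fin.sum_univ_three, z]
    · simp [Matrix.det_fin_three]
  rw [halfDisc_of_polar_eq_zero q hxz hyz, neg_eq_iff_eq_neg] at hz
  exact ⟨z, hxz, hyz, isUnit_of_mul_isUnit_left (hz ▸ ((hxy.pow 2).mul ht).neg)⟩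

theorem exists_isotropic_polar_eq_pairDisc (hsq : ∀ s : R, ∃ t, t ^ 2 = s) {x y z : V}
    (hxz : polar q x z = 0) (hyz : polar q y z = 0) (hz : IsUnit (q z)) :
    ∃ h w, q h = 0 ∧ polar q h w = pairDisc q x y := by
  obtain ⟨c, hc⟩ := hz
  obtain ⟨γ, hγ⟩ := hsq (-(q x * ↑c⁻¹))
  refine ⟨x + γ • z, polar q x y • y - (2 * q y) • x, ?_, ?_⟩
  · rw [QuadraticMap.map_add (⇑q), QuadraticMap.map_smul, polar_smul_right, hxz, smul_eq_mul,
      ← pow_two, hγ, ← hc, neg_mul, mul_assoc, Units.inv_mul]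
    ring
  · simp only [polar_sub_right, polar_add_left, polar_smul_left, polar_smul_right, polar_self,
      polar_comm q z, hxz, hyz, smul_eq_mul, pairDisc]
    ring

theorem exists_isotropic_polar_eq_one {h w : V} (hh : q h = 0) (hw : IsUnit (polar q h w)) :
    ∃ h', q h' = 0 ∧ polar q h h' = 1 := by
  obtain ⟨u, hu⟩ := hw
  obtain ⟨w', hw'⟩ : ∃ w', polar q h w' = 1 :=
    ⟨(↑u⁻¹ : R) • w, by rw [polar_smul_right, ← hu, smul_eq_mul, Units.inv_mul]⟩
  refine ⟨w' - q w' • h, ?_, ?_⟩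
  · rw [sub_eq_add_neg, ← neg_smul, QuadraticMap.map_add (⇑q), QuadraticMap.map_smul,
      polar_smul_right, polar_comm, hw', hh]
    simp
  · rw [polar_sub_right, polar_smul_right, hw', polar_self, hh]
    simp

/-- The Gram data of `x₀ x₁ + x₂ ^ 2` on the standard basis. -/
structure IsStandardTriple (q : QuadraticForm R V) (b : Fin 3 → V) : Prop where
  apply_zero : q (b 0) = 0
  apply_one : q (b 1) = 0
  apply_two : q (b 2) = 1
  polar_zero_one : polar q (b 0) (b 1) = 1
  polar_zero_two : polar q (b 0) (b 2) = 0
  polar_one_two : polar q (b 1) (b 2) = 0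

theorem IsStandardTriple.apply_sum {b : Fin 3 → V} (hb : IsStandardTriple q b) (v : Fin 3 → R) :
    q (∑ i, v i • b i) = v 0 * v 1 + v 2 ^ 2 := by
  rw [map_sum_fin_three, hb.apply_zero, hb.apply_one, hb.apply_two, hb.polar_zero_one,
    hb.polar_zero_two, hb.polar_one_two]
  ring

theorem IsStandardTriple.halfDisc_eq {b : Fin 3 → V} (hb : IsStandardTriple q b) :
    halfDisc q b = -1 := by
  rw [halfDisc, hb.apply_zero, hb.apply_one, hb.apply_two, hb.polar_zero_one,
    hb.polar_zero_two, hb.polar_one_two]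
  ring

end

section

variable {R : Type*} [CommRing R] (q : QuadraticForm R (Fin 3 → R))

theorem halfDisc_eq_det_sq_mul (f : Fin 3 → Fin 3 → R) :
    halfDisc q f = (Matrix.of f).det ^ 2 * halfDisc q (fun i => Pi.single i 1) := by
  convert halfDisc_sum_smul q (Matrix.of f) (fun i => Pi.single i 1)
  exact pi_eq_sum_univ' _

open Matrix in
/-- The witness is `t = -adj(G) (x ⨯₃ y)` for the Gram matrix `G` of `polar q`:
`det ![x, y, t] = -(x ⨯₃ y) ⬝ᵥ adj(G) (x ⨯₃ y)`, which is minus the Gram determinant of `x, y`. -/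
theorem exists_det_eq_pairDisc (x y : Fin 3 → R) :
    ∃ t, (Matrix.of ![x, y, t]).det = pairDisc q x y := by
  set e : Fin 3 → Fin 3 → R := fun i => Pi.single i 1
  set G := Matrix.of fun i j => polar q (e i) (e j)
  refine ⟨-(G.adjugate *ᵥ (x ⨯₃ y)), ?_⟩
  conv_rhs => rw [pairDisc, pi_eq_sum_univ' x, pi_eq_sum_univ' y, map_sum_fin_three,
    map_sum_fin_three, polar_sum_fin_three]
  simp only [det_fin_three, adjugate_fin_three, cross_apply, mulVec, dotProduct,
    Fin.sum_univ_three, of_apply, cons_val_zero, cons_val_one, cons_val_two, head_cons, tail_cons,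
    Pi.neg_apply, G, polar_self, polar_comm q (e 1) (e 0), polar_comm q (e 2) (e 0),
    polar_comm q (e 2) (e 1)]
  ring

theorem exists_orthogonal_isUnit (hq : IsUnit (halfDisc q fun i => Pi.single i 1))
    {x y : Fin 3 → R} (hxy : IsUnit (pairDisc q x y)) :
    ∃ z, polar q x z = 0 ∧ polar q y z = 0 ∧ IsUnit (q z) := by
  obtain ⟨t, ht⟩ := exists_det_eq_pairDisc q x y
  refine exists_orthogonal_isUnit_of_isUnit_halfDisc (t := t) hxy ?_
  rw [halfDisc_eq_det_sq_mul, ht]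
  exact (hxy.pow 2).mul hq

theorem isUnit_det_of_isUnit_halfDisc {f : Fin 3 → Fin 3 → R} (hf : IsUnit (halfDisc q f)) :
    IsUnit (Matrix.of f).det := by
  rw [halfDisc_eq_det_sq_mul] at hf
  exact (isUnit_pow_iff two_ne_zero).mp (isUnit_of_mul_isUnit_left hf)

theorem exists_isStandardTriple [Finite (MaximalSpectrum R)] (hsq : ∀ s : R, ∃ t, t ^ 2 = s)
    (hq : IsUnit (halfDisc q fun i => Pi.single i 1)) : ∃ b, IsStandardTriple q b := by
  obtain ⟨x, y, hxy⟩ := exists_isUnit_pairDisc _ hq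
  obtain ⟨z, hxz, hyz, hz⟩ := exists_orthogonal_isUnit q hq hxy
  obtain ⟨h, w, hh, hhw⟩ := exists_isotropic_polar_eq_pairDisc hsq hxz hyz hz
  obtain ⟨h', hh', hhh'⟩ := exists_isotropic_polar_eq_one hh (hhw ▸ hxy)
  have hhyp : pairDisc q h h' = 1 := by simp [pairDisc, hh, hh', hhh']
  obtain ⟨f, hhf, hh'f, ⟨c, hc⟩⟩ := exists_orthogonal_isUnit q hq (hhyp ▸ isUnit_one)
  obtain ⟨r, hr⟩ := hsq ↑c⁻¹
  refine ⟨![h, h', r • f], hh, hh', ?_, hhh', ?_, ?_⟩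
  · simp [QuadraticMap.map_smul, ← hc, ← pow_two, hr]
  · simp [polar_smul_right, hhf]
  · simp [polar_smul_right, hh'f]

end

open Matrix in
theorem exists_linearEquiv_symm_apply {R : Type*} [CommRing R] {n : Type*} [Fintype n]
    [DecidableEq n] (b : n → n → R) (hb : IsUnit (Matrix.of b).det) :
    ∃ g : (n → R) ≃ₗ[R] (n → R), ∀ v, g.symm v = ∑ i, v i • b i := by
  have : IsUnit (of b)ᵀ.det := by rwa [det_transpose]
  refine ⟨((of b)ᵀ.toLinearEquiv' (invertibleOfIsUnitDet _ this)).symm, fun v => ?_⟩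
  rw [LinearEquiv.symm_symm]
  exact (mulVec_transpose _ v).trans (vecMul_eq_sum v _)

/-- Over a 2-perfect semilocal commutative ring `S`, any semiregular ternary quadratic form
on `S³` is isometric to the standard form `x₁x₂ + x₃²`: there is `g ∈ GL(V)` with
`q ∘ g⁻¹ = q¹`. -/
theorem semiregular_isometric_standard {S : Type*} [CommRing S]
    [Finite (MaximalSpectrum S)] (hsq : ∀ s : S, ∃ t : S, t ^ 2 = s)
    (q : QuadraticForm S (Fin 3 → S))
    (hq : IsUnit (halfDisc q fun i => Pi.single i 1)) :
    ∃ g : (Fin 3 → S) ≃ₗ[S] (Fin 3 → S),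
      ∀ v : Fin 3 → S, q (g.symm v) = v 0 * v 1 + v 2 ^ 2 := by
  obtain ⟨b, hb⟩ := exists_isStandardTriple q hsq hq
  have hdet : IsUnit (Matrix.of b).det :=
    isUnit_det_of_isUnit_halfDisc q (hb.halfDisc_eq ▸ isUnit_one.neg)
  obtain ⟨g, hg⟩ := exists_linearEquiv_symm_apply b hdet
  exact ⟨g, fun v => by rw [hg, hb.apply_sum]⟩
end
end

section
/- If A is a faithful finitely generated projective algebra over a commutative ring R, then A admits at most one standard involution, i.e., at most one R-algebra anti-automorphism σ with σ² = id, σ fixing R·1, and such that x + σ(x) ∈ R·1 and x·σ(x) ∈ R·1 for all x ∈ A. -/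
/-!
If `σ` and `τ` are standard involutions, then `σ x - τ x = (x + σ x) - (x + τ x)` lies in
`R·1`, so `σ - τ = c(-)·1` for a linear form `c : A → R` with `c 1 = 0`. Since `x` commutes
with `σ x` and `τ x`, subtracting `x·σ x` and `x·τ x` gives `c x • x ∈ R·1` for every `x`.
Such a form vanishes: after localizing at a prime, `A` is free and, by Nakayama, `1` has a
unit coordinate `i₀` in a basis `b`. Then comparing `i₀`-coordinates in `c (b i) • b i ∈ R·1`
forces `c (b i) = 0` for `i ≠ i₀`, and finally `c 1 = 0` forces `c (b i₀) = 0`.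
-/

open IsLocalRing

theorem IsLocalRing.one_notMem_maximalIdeal_smul_top {R A : Type*} [CommRing R] [IsLocalRing R]
    [Ring A] [Algebra R A] [Nontrivial A] [Module.Finite R A] :
    (1 : A) ∉ maximalIdeal R • (⊤ : Submodule R A) := by
  intro h
  have htop : (⊤ : Submodule R A) ≤ maximalIdeal R • ⊤ := fun x _ => by
    have hx := Submodule.mem_map_of_mem (f := LinearMap.mulLeft R x) h
    rw [Submodule.map_smul'', LinearMap.mulLeft_apply, mul_one] at hx
    exact Submodule.smul_mono le_rfl le_top hx
  exact top_ne_bot <| Submodule.eq_bot_of_le_smul_of_le_jacobson_bot (maximalIdeal R) ⊤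
    Module.Finite.fg_top htop (maximalIdeal_le_jacobson _)

theorem IsLocalRing.exists_isUnit_repr_of_notMem_maximalIdeal_smul_top {R M ι : Type*}
    [CommRing R] [IsLocalRing R] [AddCommGroup M] [Module R M] (b : Module.Basis ι R M) {e : M}
    (he : e ∉ maximalIdeal R • (⊤ : Submodule R M)) : ∃ i, IsUnit (b.repr e i) := by
  by_contra! h
  refine he ?_
  rw [← b.linearCombination_repr e, Finsupp.linearCombination_apply]
  exact Submodule.finsuppSum_mem _ _ _ _ fun i _ =>
    Submodule.smul_mem_smul ((mem_maximalIdeal _).mpr (h i)) trivial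

/-- Unlike `LocalizedModule.algebraOfIsLocalization`, this extends the default module structure
of `LocalizedModule S A` over `Localization S`. -/
noncomputable abbrev LocalizedModule.algebraLocalization {R A : Type*} [CommSemiring R]
    [Semiring A] [Algebra R A] (S : Submonoid R) :
    Algebra (Localization S) (LocalizedModule S A) :=
  Algebra.ofModule
    (fun r x y => by
      induction r using Localization.induction_on
      induction x using LocalizedModule.induction_on
      induction y using LocalizedModule.induction_on
      simp only [LocalizedModule.mk_smul_mk, LocalizedModule.mk_mul_mk, smul_mul_assoc, mul_assoc])
    (fun r x y => by
      induction r using Localization.induction_on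
      induction x using LocalizedModule.induction_on
      induction y using LocalizedModule.induction_on
      simp only [LocalizedModule.mk_smul_mk, LocalizedModule.mk_mul_mk, mul_smul_comm,
        mul_left_comm])

namespace LinearMap

section Module

variable {R M : Type*} [CommRing R] [AddCommGroup M] [Module R M]

theorem eq_zero_of_smul_self_mem_span_of_isUnit_repr {ι : Type*} (b : Module.Basis ι R M)
    {e : M} {i₀ : ι} (he : IsUnit (b.repr e i₀)) (c : M →ₗ[R] R) (hce : c e = 0)
    (hc : ∀ i, c (b i) • b i ∈ R ∙ e) : c = 0 := by
  have hne : ∀ i ≠ i₀, c (b i) = 0 := by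
    intro i hi
    obtain ⟨r, hr⟩ := Submodule.mem_span_singleton.mp (hc i)
    have hr0 : r = 0 := by
      simpa [hi.symm, he.mul_left_eq_zero] using congr_arg (b.repr · i₀) hr
    simpa [hr0] using congr_arg (b.repr · i) hr.symm
  have h₀ : b.repr e i₀ * c (b i₀) = 0 :=
    calc b.repr e i₀ * c (b i₀) = c ((b.repr e).sum fun i a => a • b i) := by
          rw [map_finsuppSum, Finsupp.sum_eq_single i₀
            (fun i _ hi => by rw [map_smul, hne i hi, smul_zero])
            (fun _ => by rw [zero_smul, map_zero]), map_smul, smul_eq_mul]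
      _ = 0 := by rw [← Finsupp.linearCombination_apply, b.linearCombination_repr, hce]
  refine b.ext fun i => ?_
  by_cases hi : i = i₀
  · subst hi
    simpa [he.mul_right_eq_zero] using h₀
  · exact hne i hi

theorem eq_zero_of_smul_self_mem_span_of_isLocalRing [IsLocalRing R] [Module.Finite R M]
    [Module.Projective R M] {e : M} (he : e ∉ maximalIdeal R • (⊤ : Submodule R M))
    (c : M →ₗ[R] R) (hce : c e = 0) (hc : ∀ x, c x • x ∈ R ∙ e) : c = 0 := by
  have : Module.Free R M := Module.free_of_flat_of_isLocalRing
  let b := Module.Free.chooseBasis R M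
  obtain ⟨i₀, hi₀⟩ := exists_isUnit_repr_of_notMem_maximalIdeal_smul_top b he
  exact eq_zero_of_smul_self_mem_span_of_isUnit_repr b hi₀ c hce fun i => hc (b i)

end Module

section Algebra

variable {R A : Type*} [CommRing R] [Ring A] [Algebra R A] [Module.Finite R A]
  [Module.Projective R A]

theorem eq_zero_of_smul_self_mem_span_one_of_isLocalRing [IsLocalRing R] (c : A →ₗ[R] R)
    (h1 : c 1 = 0) (hc : ∀ x, c x • x ∈ R ∙ (1 : A)) : c = 0 := by
  cases subsingleton_or_nontrivial A
  · exact ext fun x => by rw [Subsingleton.elim x 0, map_zero, zero_apply]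
  · exact eq_zero_of_smul_self_mem_span_of_isLocalRing (M := A)
      one_notMem_maximalIdeal_smul_top c h1 hc

theorem eq_zero_of_smul_self_mem_span_one (c : A →ₗ[R] R) (h1 : c 1 = 0)
    (hc : ∀ x, c x • x ∈ R ∙ (1 : A)) : c = 0 := by
  ext x
  refine eq_zero_of_localization (c x) fun P _ => ?_
  let S := P.primeCompl
  let Rₚ := Localization.AtPrime P
  let Aₚ := LocalizedModule S A
  let f := LocalizedModule.mkLinearMap S A
  let _ : Algebra Rₚ Aₚ := LocalizedModule.algebraLocalization S
  have : Module.Finite Rₚ Aₚ := Module.Finite.of_isLocalizedModule S f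
  have : Module.Projective Rₚ Aₚ := Module.projective_of_isLocalizedModule S f
  let cₚ : Aₚ →ₗ[Rₚ] Rₚ :=
    IsLocalizedModule.mapExtendScalars S f (Algebra.linearMap R Rₚ) Rₚ c
  have hcₚ : ∀ y, cₚ (f y) = algebraMap R Rₚ (c y) := fun y => by
    simp [cₚ, IsLocalizedModule.map_apply]
  have hf1 : f 1 = 1 := by rw [LocalizedModule.mkLinearMap_apply, OreLocalization.one_def]
  have hcₚ1 : cₚ 1 = 0 := by rw [← hf1, hcₚ, h1, map_zero]
  have hcₚx : ∀ z, cₚ z • z ∈ Rₚ ∙ (1 : Aₚ) := fun z => by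
    obtain ⟨⟨y, s⟩, hs⟩ := IsLocalizedModule.surj S f z
    rw [Submonoid.smul_def] at hs
    obtain ⟨r, hr⟩ := Submodule.mem_span_singleton.mp (hc y)
    have hsc : (s : R) • cₚ z = algebraMap R Rₚ (c y) := by
      rw [← hcₚ, ← hs, LinearMap.map_smul_of_tower]
    have hss : ((s : R) * s) • (cₚ z • z) = algebraMap R Rₚ r • 1 :=
      calc ((s : R) * s) • (cₚ z • z) = ((s : R) • cₚ z) • ((s : R) • z) := by
            rw [mul_smul, smul_comm (s : R) (cₚ z), smul_assoc]
        _ = f (c y • y) := by rw [hsc, hs, algebraMap_smul, map_smul]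
        _ = algebraMap R Rₚ r • 1 := by rw [← hr, map_smul, hf1, algebraMap_smul]
    have hunit : IsUnit (algebraMap R Rₚ (s * s)) := IsLocalization.map_units Rₚ (s * s)
    rw [← Submodule.smul_mem_iff_of_isUnit _ hunit, algebraMap_smul, hss]
    exact Submodule.smul_mem _ _ (Submodule.mem_span_singleton_self 1)
  have hcₚ0 := eq_zero_of_smul_self_mem_span_one_of_isLocalRing cₚ hcₚ1 hcₚx
  rw [← hcₚ, hcₚ0, zero_apply]

end Algebra

theorem exists_algebraMap_comp_eq {R M A : Type*} [CommRing R] [AddCommGroup M] [Module R M]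
    [Ring A] [Algebra R A] [FaithfulSMul R A] (D : M →ₗ[R] A)
    (hD : ∀ x, ∃ r, D x = algebraMap R A r) :
    ∃ c : M →ₗ[R] R, ∀ x, algebraMap R A (c x) = D x := by
  let ι := LinearEquiv.ofInjective (Algebra.linearMap R A) (FaithfulSMul.algebraMap_injective R A)
  have hD' : ∀ x, D x ∈ LinearMap.range (Algebra.linearMap R A) := fun x =>
    let ⟨r, hr⟩ := hD x; ⟨r, hr.symm⟩
  exact ⟨ι.symm.toLinearMap ∘ₗ D.codRestrict _ hD', fun x =>
    congr_arg Subtype.val (ι.apply_symm_apply ⟨D x, hD' x⟩)⟩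

end LinearMap

theorem commute_of_add_eq_algebraMap {R A : Type*} [CommSemiring R] [Ring A] [Algebra R A]
    {x y : A} {r : R} (h : x + y = algebraMap R A r) : Commute x y := by
  rw [eq_sub_of_add_eq' h]
  exact (Algebra.commute_algebraMap_right r x).sub_right (Commute.refl x)

theorem standard_involution_unique_general {R A : Type*} [CommRing R] [Ring A] [Algebra R A]
    [Module.Finite R A] [Module.Projective R A] [FaithfulSMul R A]
    (σ τ : A →ₗ[R] A)
    (hσalg : ∀ r : R, σ (algebraMap R A r) = algebraMap R A r)
    (hσtr : ∀ x : A, ∃ r : R, x + σ x = algebraMap R A r)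
    (hσnm : ∀ x : A, ∃ r : R, x * σ x = algebraMap R A r)
    (hτalg : ∀ r : R, τ (algebraMap R A r) = algebraMap R A r)
    (hτtr : ∀ x : A, ∃ r : R, x + τ x = algebraMap R A r)
    (hτnm : ∀ x : A, ∃ r : R, x * τ x = algebraMap R A r) :
    σ = τ := by
  obtain ⟨c, hc⟩ := LinearMap.exists_algebraMap_comp_eq (σ - τ) fun x => by
    obtain ⟨a, ha⟩ := hσtr x
    obtain ⟨b, hb⟩ := hτtr x
    exact ⟨a - b, by rw [LinearMap.sub_apply, map_sub, ← ha, ← hb, add_sub_add_left_eq_sub]⟩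
  suffices c = 0 by
    ext x
    rw [← sub_eq_zero, ← LinearMap.sub_apply, ← hc, this, LinearMap.zero_apply, map_zero]
  refine LinearMap.eq_zero_of_smul_self_mem_span_one c ?_ fun x => ?_
  · apply FaithfulSMul.algebraMap_injective R A
    rw [hc, LinearMap.sub_apply, map_zero, ← map_one (algebraMap R A), hσalg, hτalg, sub_self]
  · obtain ⟨n₁, hn₁⟩ := hσnm x
    obtain ⟨n₂, hn₂⟩ := hτnm x
    obtain ⟨_, hσx⟩ := hσtr x
    obtain ⟨_, hτx⟩ := hτtr x
    refine Submodule.mem_span_singleton.mpr ⟨n₁ - n₂, ?_⟩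
    calc (n₁ - n₂) • (1 : A) = x * σ x - x * τ x := by
          rw [hn₁, hn₂, ← map_sub, Algebra.algebraMap_eq_smul_one]
      _ = (σ x - τ x) * x := by
          rw [sub_mul, (commute_of_add_eq_algebraMap hσx).eq,
            (commute_of_add_eq_algebraMap hτx).eq]
      _ = c x • x := by rw [Algebra.smul_def, hc, LinearMap.sub_apply]

/-- A faithful finitely generated projective algebra over a commutative ring admits at most
one standard involution: an `R`-linear anti-automorphism `σ` of order dividing 2 fixing
`R·1` such that `x + σ x` and `x * σ x` lie in `R·1` for all `x`. -/
theorem standard_involution_unique {R A : Type*} [CommRing R] [Ring A] [Algebra R A]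
    [Module.Finite R A] [Module.Projective R A] [FaithfulSMul R A]
    (σ τ : A →ₗ[R] A)
    (hσmul : ∀ x y : A, σ (x * y) = σ y * σ x)
    (hσinv : ∀ x : A, σ (σ x) = x)
    (hσalg : ∀ r : R, σ (algebraMap R A r) = algebraMap R A r)
    (hσtr : ∀ x : A, ∃ r : R, x + σ x = algebraMap R A r)
    (hσnm : ∀ x : A, ∃ r : R, x * σ x = algebraMap R A r)
    (hτmul : ∀ x y : A, τ (x * y) = τ y * τ x)
    (hτinv : ∀ x : A, τ (τ x) = x)
    (hτalg : ∀ r : R, τ (algebraMap R A r) = algebraMap R A r)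
    (hτtr : ∀ x : A, ∃ r : R, x + τ x = algebraMap R A r)
    (hτnm : ∀ x : A, ∃ r : R, x * τ x = algebraMap R A r) :
    σ = τ :=
  standard_involution_unique_general σ τ hσalg hσtr hσnm hτalg hτtr hτnm
end

section
/- If C₀(g,l) is the identity automorphism of C₀(V,q), where g is a self-similarity of a ternary quadratic form q on free V = R³ with multiplier l, then g = l⁻¹·det(g)·Id_V; moreover if l = 1 (g is an isometry) then g = det(g)·Id_V with det(g)² = 1. -/
/-!
Contracting `ι v * ι w` by two linear functionals `d, d'` yields the scalar
`d v * d' w - d' v * d w`, and scalars embed into the Clifford algebra of a form on a free module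
(Chevalley's `changeForm` maps it onto the exterior algebra). With coordinate functionals on `R³`
the hypothesis thus becomes `g u ⨯₃ g v = l • (u ⨯₃ v)`. Since the cross product transforms by the
cofactor matrix, `adjugate g = l • 1`, and `g * adjugate g = det g • 1` gives `l • g = det g • 1`.
For `l = 1`, `det g ^ 2 = det (adjugate g) = 1`.
-/

open CliffordAlgebra Matrix

namespace CliffordAlgebra

variable {R M : Type*} [CommRing R] [AddCommGroup M] [Module R M]

theorem algebraMap_injective_of_free [Module.Free R M] (Q : QuadraticForm R M) :
    Function.Injective (algebraMap R (CliffordAlgebra Q)) := by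
  obtain ⟨B, hB⟩ := LinearMap.BilinMap.toQuadraticMap_surjective (0 - Q)
  exact Function.LeftInverse.injective (g := ExteriorAlgebra.algebraMapInv ∘ changeForm hB)
    fun r => by simp

theorem contractLeft_contractLeft_ι_mul_ι {Q : QuadraticForm R M} (d d' : Module.Dual R M)
    (v w : M) :
    contractLeft d' (contractLeft d (ι Q v * ι Q w)) = algebraMap R _ (d v * d' w - d' v * d w) := by
  rw [contractLeft_ι_mul, contractLeft_ι, map_sub, map_smul, contractLeft_ι, contractLeft_ι_mul,
    contractLeft_algebraMap, mul_zero, sub_zero, map_sub, map_mul, map_mul,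
    Algebra.smul_def, Algebra.smul_def]

theorem minor_eq_of_smul_ι_mul_ι_eq [Module.Free R M] {Q : QuadraticForm R M} {c : R}
    {v w v' w' : M} (h : c • (ι Q v * ι Q w) = ι Q v' * ι Q w') (d d' : Module.Dual R M) :
    c * (d v * d' w - d' v * d w) = d v' * d' w' - d' v' * d w' := by
  apply algebraMap_injective_of_free Q
  have := congrArg (fun x => contractLeft d' (contractLeft d x)) h
  rwa [map_smul, map_smul, contractLeft_contractLeft_ι_mul_ι, contractLeft_contractLeft_ι_mul_ι,
    Algebra.smul_def, ← map_mul] at this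

end CliffordAlgebra

section CrossProduct

variable {R : Type*} [CommRing R]

theorem CliffordAlgebra.cross_eq_of_smul_ι_mul_ι_eq {Q : QuadraticForm R (Fin 3 → R)} {c : R}
    {v w v' w' : Fin 3 → R} (h : c • (ι Q v * ι Q w) = ι Q v' * ι Q w') :
    c • (v ⨯₃ w) = v' ⨯₃ w' := by
  have hminor (i j : Fin 3) := minor_eq_of_smul_ι_mul_ι_eq h (LinearMap.proj i) (LinearMap.proj j)
  simp only [LinearMap.proj_apply] at hminor
  ext i
  fin_cases i
  · simpa [cross_apply] using hminor 1 2
  · simpa [cross_apply] using hminor 2 0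
  · simpa [cross_apply] using hminor 0 1

theorem Matrix.mulVec_cross_mulVec (A : Matrix (Fin 3) (Fin 3) R)
    (u v : Fin 3 → R) : (A *ᵥ u) ⨯₃ (A *ᵥ v) = (adjugate A)ᵀ *ᵥ (u ⨯₃ v) := by
  ext i
  fin_cases i <;>
    simp only [Fin.zero_eta, Fin.mk_one, Fin.reduceFinMk, Fin.isValue, cross_apply, mulVec,
      dotProduct, Fin.sum_univ_three, adjugate_fin_three, transpose_apply, of_apply, cons_val',
      cons_val_fin_one, cons_val_zero, cons_val_one, cons_val] <;>
    ring

theorem Matrix.adjugate_eq_smul_one_of_mulVec_cross_mulVec {A : Matrix (Fin 3) (Fin 3) R} {c : R}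
    (h : ∀ u v, (A *ᵥ u) ⨯₃ (A *ᵥ v) = c • (u ⨯₃ v)) : adjugate A = c • 1 := by
  rw [← transpose_inj, transpose_smul, transpose_one]
  have hcross (i : Fin 3) :
      (Pi.single (i + 1) 1 : Fin 3 → R) ⨯₃ Pi.single (i + 2) 1 = Pi.single i 1 := by
    fin_cases i <;> ext j <;> fin_cases j <;> simp [cross_apply]
  refine ext_of_mulVec_single fun i => ?_
  rw [← hcross, ← mulVec_cross_mulVec, h, smul_mulVec, one_mulVec]

theorem Matrix.eq_smul_one_of_adjugate_eq_smul_one {n : Type*} [Fintype n] [DecidableEq n]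
    {A : Matrix n n R} {u : Rˣ} (h : adjugate A = (u : R) • 1) :
    A = ((u⁻¹ : Rˣ) * A.det : R) • 1 := by
  have hmul := mul_adjugate A
  rw [h, Matrix.mul_smul, Matrix.mul_one] at hmul
  rw [mul_smul, ← hmul, smul_smul, Units.inv_mul, one_smul]

end CrossProduct

theorem even_clifford_id_implies_scalar_general {R : Type*} [CommRing R]
    (Q : QuadraticForm R (Fin 3 → R))
    (g : (Fin 3 → R) ≃ₗ[R] (Fin 3 → R)) (l : Rˣ)
    (hid : ∀ v w : Fin 3 → R,
      ((l⁻¹ : Rˣ) : R) • (ι Q (g v) * ι Q (g w)) = ι Q v * ι Q w) :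
    (∀ v : Fin 3 → R,
      g v = (((l⁻¹ : Rˣ) : R) * LinearMap.det (g : (Fin 3 → R) →ₗ[R] (Fin 3 → R))) • v)
    ∧ (l = 1 →
        (∀ v : Fin 3 → R,
          g v = (LinearMap.det (g : (Fin 3 → R) →ₗ[R] (Fin 3 → R))) • v)
        ∧ (LinearMap.det (g : (Fin 3 → R) →ₗ[R] (Fin 3 → R))) ^ 2 = 1) := by
  set A := LinearMap.toMatrix' (g : (Fin 3 → R) →ₗ[R] (Fin 3 → R))
  have hg (v : Fin 3 → R) : g v = A *ᵥ v := (LinearMap.toMatrix'_mulVec _ v).symm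
  have hdet : A.det = LinearMap.det (g : (Fin 3 → R) →ₗ[R] (Fin 3 → R)) :=
    LinearMap.det_toMatrix' _
  have hadj : adjugate A = (l : R) • 1 := by
    refine adjugate_eq_smul_one_of_mulVec_cross_mulVec fun u v => ?_
    rw [← hg, ← hg, ← Units.smul_def, ← inv_smul_eq_iff, Units.smul_def]
    exact cross_eq_of_smul_ι_mul_ι_eq (hid u v)
  have hscalar (v : Fin 3 → R) : g v = ((l⁻¹ : Rˣ) * A.det : R) • v := by
    conv_lhs => rw [hg, eq_smul_one_of_adjugate_eq_smul_one hadj]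
    rw [smul_mulVec, one_mulVec]
  refine ⟨hdet ▸ hscalar, fun hl => ⟨fun v => by simpa [hl, hdet] using hscalar v, ?_⟩⟩
  have hdet_adj := det_adjugate A
  rw [hadj, hl] at hdet_adj
  simpa [hdet] using hdet_adj.symm

/-- If the induced automorphism `C₀(g,l)` of the even Clifford algebra of a ternary
quadratic form is the identity (i.e. `l⁻¹·(g v)(g w) = v·w` on the generators), then
`g = l⁻¹·det(g)·Id`; moreover, if `l = 1` then `g = det(g)·Id` with `det(g)² = 1`. -/
theorem even_clifford_id_implies_scalar {R : Type*} [CommRing R]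
    (Q : QuadraticForm R (Fin 3 → R))
    (g : (Fin 3 → R) ≃ₗ[R] (Fin 3 → R)) (l : Rˣ)
    (hsim : ∀ v : Fin 3 → R, Q (g v) = (l : R) * Q v)
    (hid : ∀ v w : Fin 3 → R,
      ((l⁻¹ : Rˣ) : R) • (ι Q (g v) * ι Q (g w)) = ι Q v * ι Q w) :
    (∀ v : Fin 3 → R,
      g v = (((l⁻¹ : Rˣ) : R) * LinearMap.det (g : (Fin 3 → R) →ₗ[R] (Fin 3 → R))) • v)
    ∧ (l = 1 →
        (∀ v : Fin 3 → R,
          g v = (LinearMap.det (g : (Fin 3 → R) →ₗ[R] (Fin 3 → R))) • v)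
        ∧ (LinearMap.det (g : (Fin 3 → R) →ₗ[R] (Fin 3 → R))) ^ 2 = 1) :=
  even_clifford_id_implies_scalar_general Q g l hid
end

section
/- For bilinear forms b₁, b₂ on a projective R-module V, the Bourbaki automorphisms of the tensor algebra satisfy Ψ_{b₁+b₂} = Ψ_{b₁} ∘ Ψ_{b₂} and Ψ₀ = id, so b ↦ Ψ_b is a group homomorphism from (Bil_R(V), +) to Aut_R(T(V)). -/
private lemma bourbaki_span {R V : Type*} [CommRing R] [AddCommGroup V] [Module R V]
    (S : Submodule R (TensorAlgebra R V)) (h1 : (1 : TensorAlgebra R V) ∈ S)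
    (hmul : ∀ (x : V) z, z ∈ S → TensorAlgebra.ι R x * z ∈ S) :
    ∀ z, z ∈ S := by
  have key : ∀ z : TensorAlgebra R V, ∀ w ∈ S, z * w ∈ S := by
    intro z
    induction z using TensorAlgebra.induction with
    | algebraMap r =>
        intro w hw
        rw [Algebra.algebraMap_eq_smul_one, smul_mul_assoc, one_mul]
        exact S.smul_mem r hw
    | ι x => exact fun w hw => hmul x w hw
    | mul a b iha ihb => intro w hw; rw [mul_assoc]; exact iha _ (ihb w hw)
    | add a b iha ihb => intro w hw; rw [add_mul]; exact S.add_mem (iha w hw) (ihb w hw)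
  intro z
  simpa using key z 1 h1

/-- The Bourbaki automorphisms of the tensor algebra satisfy
`Ψ_{b₁+b₂} = Ψ_{b₁} ∘ Ψ_{b₂}` and `Ψ₀ = id`, so `b ↦ Ψ_b` is a group homomorphism
from bilinear forms under addition to automorphisms of `T(V)`.  Here `Ψ_b` is
characterized by `Ψ_b 1 = 1` and `Ψ_b (x ⊗ y) = x·Ψ_b y + t_{b_x}(Ψ_b y)`, with
`t_f` the antiderivation with `t_f 1 = 0` and `t_f(x⊗y) = f(x)y − x⊗t_f(y)`. -/
theorem bourbaki_psi_add {R V : Type*} [CommRing R] [AddCommGroup V] [Module R V]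
    [Module.Projective R V]
    (b₁ b₂ : V →ₗ[R] V →ₗ[R] R)
    (t : (V →ₗ[R] R) → TensorAlgebra R V →ₗ[R] TensorAlgebra R V)
    (ht1 : ∀ f : V →ₗ[R] R, t f 1 = 0)
    (htm : ∀ (f : V →ₗ[R] R) (x : V) (y : TensorAlgebra R V),
      t f (TensorAlgebra.ι R x * y) = f x • y - TensorAlgebra.ι R x * t f y)
    (P P₁ P₂ P₀ : TensorAlgebra R V →ₗ[R] TensorAlgebra R V)
    (hP1 : P 1 = 1)
    (hPm : ∀ (x : V) (y : TensorAlgebra R V),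
      P (TensorAlgebra.ι R x * y) = TensorAlgebra.ι R x * P y + t ((b₁ + b₂) x) (P y))
    (hP₁1 : P₁ 1 = 1)
    (hP₁m : ∀ (x : V) (y : TensorAlgebra R V),
      P₁ (TensorAlgebra.ι R x * y) = TensorAlgebra.ι R x * P₁ y + t (b₁ x) (P₁ y))
    (hP₂1 : P₂ 1 = 1)
    (hP₂m : ∀ (x : V) (y : TensorAlgebra R V),
      P₂ (TensorAlgebra.ι R x * y) = TensorAlgebra.ι R x * P₂ y + t (b₂ x) (P₂ y))
    (hP₀1 : P₀ 1 = 1)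
    (hP₀m : ∀ (x : V) (y : TensorAlgebra R V),
      P₀ (TensorAlgebra.ι R x * y)
        = TensorAlgebra.ι R x * P₀ y + t ((0 : V →ₗ[R] V →ₗ[R] R) x) (P₀ y)) :
    (∀ z : TensorAlgebra R V, P z = P₁ (P₂ z))
    ∧ ∀ z : TensorAlgebra R V, P₀ z = z := by
  -- additivity of `t` in `f`
  have hadd : ∀ f g : V →ₗ[R] R, ∀ z, t (f + g) z = t f z + t g z := by
    intro f g
    refine bourbaki_span (LinearMap.eqLocus (t (f + g)) (t f + t g)) ?_ ?_
    · show t (f + g) 1 = (t f + t g) 1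
      simp [ht1]
    · intro x z hz
      show t (f + g) (TensorAlgebra.ι R x * z) = (t f + t g) (TensorAlgebra.ι R x * z)
      have hz' : t (f + g) z = t f z + t g z := hz
      simp only [htm, LinearMap.add_apply, hz', add_smul, mul_add]
      abel
  have ht0 : ∀ z, t (0 : V →ₗ[R] R) z = 0 := by
    intro z
    have h := hadd 0 0 z
    rw [add_zero] at h
    exact (left_eq_add.mp h)
  -- anticommutation of `t f` and `t g`
  have hanti : ∀ f g : V →ₗ[R] R, ∀ z, t f (t g z) = - t g (t f z) := by
    intro f g
    refine bourbaki_span (LinearMap.eqLocus ((t f).comp (t g)) (-(t g).comp (t f))) ?_ ?_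
    · show t f (t g 1) = -(t g (t f 1))
      simp [ht1]
    · intro x z hz
      show t f (t g (TensorAlgebra.ι R x * z)) = -(t g (t f (TensorAlgebra.ι R x * z)))
      have hz' : t f (t g z) = -(t g (t f z)) := hz
      simp only [htm, map_sub, map_smul, htm, hz', mul_neg]
      abel
  -- `P₁` commutes with each `t f`
  have hcomm : ∀ f : V →ₗ[R] R, ∀ z, t f (P₁ z) = P₁ (t f z) := by
    intro f
    refine bourbaki_span (LinearMap.eqLocus ((t f).comp P₁) (P₁.comp (t f))) ?_ ?_
    · show t f (P₁ 1) = P₁ (t f 1)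
      simp [ht1, hP₁1]
    · intro x z hz
      show t f (P₁ (TensorAlgebra.ι R x * z)) = P₁ (t f (TensorAlgebra.ι R x * z))
      have hz' : t f (P₁ z) = P₁ (t f z) := hz
      rw [hP₁m, map_add, htm, htm, map_sub, map_smul, hP₁m, hanti f (b₁ x), hz']
      abel
  constructor
  · refine bourbaki_span (LinearMap.eqLocus P (P₁.comp P₂)) ?_ ?_
    · show P 1 = P₁ (P₂ 1)
      rw [hP1, hP₂1, hP₁1]
    · intro x z hz
      show P (TensorAlgebra.ι R x * z) = P₁ (P₂ (TensorAlgebra.ι R x * z))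
      have hz' : P z = P₁ (P₂ z) := hz
      rw [hPm, hP₂m, map_add, hP₁m, hz']
      have hb : (b₁ + b₂) x = b₁ x + b₂ x := rfl
      rw [hb, hadd]
      simp only [hcomm]
      abel
  · refine bourbaki_span (LinearMap.eqLocus P₀ LinearMap.id) ?_ ?_
    · exact hP₀1
    · intro x z hz
      show P₀ (TensorAlgebra.ι R x * z) = TensorAlgebra.ι R x * z
      have hz' : P₀ z = z := hz
      rw [hP₀m, hz']
      simp [ht0]
end

section
/- In the even Clifford algebra C₀(V,q) of a ternary quadratic form q with coefficients λᵢ = q(eᵢ) and λᵢⱼ = b_q(eᵢ,eⱼ), the elements ε₁ = e₁e₂, ε₂ = e₂e₃, ε₃ = e₃e₁ satisfy ε₂·ε₁ = (−λ₁₂λ₂₃)·1 + λ₂₃·ε₁ + λ₁₂·ε₂ + λ₂·ε₃. -/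
/-!
Write `a, b, c` for the images of `e₁, e₂, e₃`. Moving the right-hand `b` of `b·c·a·b` to the
left past `a` and then `c` with `xy = b_q(x, y) - yx` leaves `b·b·c·a = λ₂·ca`, and the scalars
collected on the way give the other three terms; the relation between `a` and `c` never
enters.
-/

open CliffordAlgebra

theorem Matrix.toQuadraticForm'_single {n R : Type*} [Fintype n] [DecidableEq n] [CommRing R]
    (M : Matrix n n R) (i : n) : M.toQuadraticForm' (Pi.single i 1) = M i i := by
  simp [Matrix.toQuadraticForm', Matrix.toLinearMap₂'_apply']

theorem Matrix.polar_toQuadraticForm'_single {n R : Type*} [Fintype n] [DecidableEq n]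
    [CommRing R] (M : Matrix n n R) (i j : n) :
    QuadraticMap.polar M.toQuadraticForm' (Pi.single i 1) (Pi.single j 1) = M i j + M j i := by
  simp [Matrix.toQuadraticForm', LinearMap.BilinMap.polar_toQuadraticMap,
    Matrix.toLinearMap₂'_apply']

namespace CliffordAlgebra

variable {R M : Type*} [CommRing R] [AddCommGroup M] [Module R M] {Q : QuadraticForm R M}

theorem ι_mul_ι_mul_ι_mul_ι_self_right (a b c : M) :
    ι Q b * ι Q c * (ι Q a * ι Q b)
      = algebraMap R _ (-(QuadraticMap.polar Q a b * QuadraticMap.polar Q b c))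
        + QuadraticMap.polar Q b c • (ι Q a * ι Q b)
        + QuadraticMap.polar Q a b • (ι Q b * ι Q c)
        + Q b • (ι Q c * ι Q a) := by
  have hcab : ι Q c * ι Q a * ι Q b
      = QuadraticMap.polar Q a b • ι Q c - QuadraticMap.polar Q b c • ι Q a
        + ι Q b * ι Q c * ι Q a := by
    rw [mul_assoc, ι_mul_ι_comm a b, mul_sub, ← mul_assoc, ι_mul_ι_comm c b,
      QuadraticMap.polar_comm Q c b]
    simp only [← Algebra.commutes, ← Algebra.smul_def, sub_mul]
    abel
  calc ι Q b * ι Q c * (ι Q a * ι Q b) = ι Q b * (ι Q c * ι Q a * ι Q b) := by noncomm_ring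
    _ = QuadraticMap.polar Q a b • (ι Q b * ι Q c)
          - QuadraticMap.polar Q b c • (ι Q b * ι Q a)
          + (ι Q b * ι Q b) * (ι Q c * ι Q a) := by
        rw [hcab, mul_add, mul_sub, mul_smul_comm, mul_smul_comm]
        noncomm_ring
    _ = _ := by
        rw [ι_mul_ι_comm b a, ι_sq_scalar, QuadraticMap.polar_comm Q b a]
        simp only [Algebra.algebraMap_eq_smul_one, smul_mul_assoc, one_mul]
        module

end CliffordAlgebra

/-- In the even Clifford algebra of the ternary form
`q(x) = Σλᵢxᵢ² + Σ_{i<j} λᵢⱼxᵢxⱼ`, with `ε₁ = e₁e₂`, `ε₂ = e₂e₃`, `ε₃ = e₃e₁`, one has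
`ε₂·ε₁ = (−λ₁₂λ₂₃)·1 + λ₂₃·ε₁ + λ₁₂·ε₂ + λ₂·ε₃`. -/
theorem even_clifford_eps2_mul_eps1 {R : Type*} [CommRing R]
    (lam₁ lam₂ lam₃ lam₁₂ lam₁₃ lam₂₃ : R)
    (Q : QuadraticForm R (Fin 3 → R))
    (hQ : Q = (!![lam₁, 0, lam₁₃; lam₁₂, lam₂, 0; 0, lam₂₃, lam₃]).toQuadraticMap') :
    (ι Q (Pi.single 1 1) * ι Q (Pi.single 2 1))
        * (ι Q (Pi.single 0 1) * ι Q (Pi.single 1 1))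
      = algebraMap R (CliffordAlgebra Q) (-(lam₁₂ * lam₂₃))
        + lam₂₃ • (ι Q (Pi.single 0 1) * ι Q (Pi.single 1 1))
        + lam₁₂ • (ι Q (Pi.single 1 1) * ι Q (Pi.single 2 1))
        + lam₂ • (ι Q (Pi.single 2 1) * ι Q (Pi.single 0 1)) := by
  rw [Matrix.toQuadraticMap'] at hQ
  have hQ₂ : Q (Pi.single 1 1) = lam₂ := by
    rw [hQ, Matrix.toQuadraticForm'_single]; rfl
  have hpolar₁₂ : QuadraticMap.polar Q (Pi.single 0 1) (Pi.single 1 1) = lam₁₂ := by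
    rw [hQ, Matrix.polar_toQuadraticForm'_single]; simp
  have hpolar₂₃ : QuadraticMap.polar Q (Pi.single 1 1) (Pi.single 2 1) = lam₂₃ := by
    rw [hQ, Matrix.polar_toQuadraticForm'_single]; simp
  rw [ι_mul_ι_mul_ι_mul_ι_self_right, hQ₂, hpolar₁₂, hpolar₂₃]
end
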